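/- arXiv:2301.01985 — 2 statements merged into one kernel-verified Lean document; each statement's English description precedes it below -/
import Mathlib

section
/- For every polynomial x with integer coefficients and every integer n ≥ 1, the integer n^3 divides ∑_{k=0}^{n−1} [ k^3 x(k−2) − (2k+1)(17k^2+17k+5) x(k−1) + (k+1)^3 x(k) ] · A_k, where x is evaluated at the indicated integers (which may be negative). -/
/-!
Apéry's recurrence `L A = 0` is certified by Zeilberger's method: with
`F(n, k) = (C(n, k) C(n + k, k))²` and `G(n, k) = 4 (2n + 1) (k (2k + 1) - (2n + 1)²) F(n, k)`,
applying `L` to `F(·, k)` gives `G(n + 1, k) - G(n + 1, k - 1)`, which telescopes over `k`.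
Summation by parts against the adjoint then collapses the sum to a boundary term:
`∑_{k ≤ m} L*(x)(k) A_k = (m + 1)³ (x(m) A_m - x(m - 1) A_{m + 1})`,
visibly divisible by `(m + 1)³`.
-/

open Finset Polynomial

/-- The Apéry numbers `A n = ∑_{k=0}^n (n choose k)^2 ((n+k) choose k)^2`. -/
def apery (n : ℕ) : ℤ :=
  ∑ k ∈ Finset.range (n + 1), ((n.choose k : ℤ)) ^ 2 * (((n + k).choose k : ℤ)) ^ 2

section Adjoint

variable {R : Type*} [CommRing R]

/-- At `k = 0` the term `a (k - 1)` is a junk value, but its coefficient `k ^ 3` vanishes. -/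
theorem sum_adjoint_mul_eq_boundary {a : ℕ → R}
    (ha : ∀ k : ℕ, ((k : R) + 1) ^ 3 * a (k + 1)
      = (2 * (k : R) + 1) * (17 * (k : R) ^ 2 + 17 * k + 5) * a k - (k : R) ^ 3 * a (k - 1))
    (y : ℤ → R) (m : ℕ) :
    ∑ k ∈ range (m + 1),
      ((k : R) ^ 3 * y ((k : ℤ) - 2)
        - (2 * (k : R) + 1) * (17 * (k : R) ^ 2 + 17 * k + 5) * y ((k : ℤ) - 1)
        + ((k : R) + 1) ^ 3 * y k) * a k
      = ((m : R) + 1) ^ 3 * (y m * a m - y ((m : ℤ) - 1) * a (m + 1)) := by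
  induction m with
  | zero =>
    have hrec := ha 0
    norm_num at hrec ⊢
    linear_combination y (-1) * hrec
  | succ m ih =>
    rw [sum_range_succ, ih]
    have hrec := ha (m + 1)
    push_cast at hrec ⊢
    simp only [add_tsub_cancel_right, show (m : ℤ) + 1 - 2 = m - 1 by ring] at hrec ⊢
    linear_combination y m * hrec

end Adjoint

theorem natCast_choose_succ_right_eq (n k : ℕ) :
    (n.choose (k + 1) : ℤ) * (k + 1) = n.choose k * ((n : ℤ) - k) := by
  rcases le_or_gt k n with hk | hk
  · have h := Nat.choose_succ_right_eq n k
    zify [hk] at h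
    exact h
  · simp [Nat.choose_eq_zero_of_lt hk, Nat.choose_eq_zero_of_lt (hk.trans (Nat.lt_succ_self k))]

theorem natCast_choose_mul_succ_eq (n k : ℕ) :
    (n.choose k : ℤ) * ((n : ℤ) + 1) = (n + 1).choose k * ((n : ℤ) + 1 - k) := by
  rcases le_or_gt k (n + 1) with hk | hk
  · have h := Nat.choose_mul_succ_eq n k
    zify [hk] at h
    exact h
  · simp [Nat.choose_eq_zero_of_lt hk, Nat.choose_eq_zero_of_lt ((Nat.lt_succ_self n).trans hk)]

def aperyBinom (n k : ℕ) : ℤ :=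
  n.choose k * (n + k).choose k

theorem aperyBinom_succ_left_mul (n k : ℕ) :
    aperyBinom (n + 1) k * ((n : ℤ) + 1 - k) = aperyBinom n k * ((n : ℤ) + 1 + k) := by
  have h₁ := natCast_choose_mul_succ_eq n k
  have h₂ := natCast_choose_mul_succ_eq (n + k) k
  unfold aperyBinom
  rw [show n + 1 + k = n + k + 1 by omega]
  push_cast at h₂
  refine mul_right_cancel₀ (b := (n : ℤ) + 1) (by positivity) ?_
  linear_combination -((n + k + 1).choose k : ℤ) * (n + 1) * h₁ - (n.choose k : ℤ) * (n + 1) * h₂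

theorem aperyBinom_succ_right_mul (n k : ℕ) :
    aperyBinom n (k + 1) * ((k : ℤ) + 1) ^ 2
      = aperyBinom n k * ((n : ℤ) - k) * ((n : ℤ) + k + 1) := by
  have h₁ := natCast_choose_succ_right_eq n k
  have h₂ : ((n : ℤ) + k + 1) * (n + k).choose k = (n + k + 1).choose (k + 1) * ((k : ℤ) + 1) := by
    exact_mod_cast Nat.add_one_mul_choose_eq (n + k) k
  unfold aperyBinom
  rw [show n + (k + 1) = n + k + 1 by omega]
  linear_combination ((n + k + 1).choose (k + 1) : ℤ) * (k + 1) * h₁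
    - (n.choose k : ℤ) * (n - k) * h₂

/-- Zeilberger's certificate for the recurrence of the Apéry numbers. -/
def aperyCert (n k : ℕ) : ℤ :=
  4 * (2 * (n : ℤ) + 1) * ((k : ℤ) * (2 * k + 1) - (2 * (n : ℤ) + 1) ^ 2) * aperyBinom n k ^ 2

theorem aperyBinom_sq_recurrence_eq_aperyCert_sub (m j : ℕ) :
    ((m : ℤ) + 2) ^ 3 * aperyBinom (m + 2) (j + 1) ^ 2
      - (2 * (m : ℤ) + 3) * (17 * (m : ℤ) ^ 2 + 51 * m + 39) * aperyBinom (m + 1) (j + 1) ^ 2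
      + ((m : ℤ) + 1) ^ 3 * aperyBinom m (j + 1) ^ 2
      = aperyCert (m + 1) (j + 1) - aperyCert (m + 1) j := by
  have h₂ : aperyBinom (m + 2) (j + 1) * ((j : ℤ) + 1) ^ 2
      = aperyBinom (m + 1) j * (m + j + 2) * (m + j + 3) := by
    have e₁ := aperyBinom_succ_right_mul (m + 2) j
    have e₂ := aperyBinom_succ_left_mul (m + 1) j
    push_cast at e₁ e₂
    linear_combination e₁ + (m + j + 3) * e₂
  have h₁ : aperyBinom (m + 1) (j + 1) * ((j : ℤ) + 1) ^ 2
      = aperyBinom (m + 1) j * (m + 1 - j) * (m + j + 2) := by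
    have e := aperyBinom_succ_right_mul (m + 1) j
    push_cast at e
    linear_combination e
  have h₀ : aperyBinom m (j + 1) * ((j : ℤ) + 1) ^ 2
      = aperyBinom (m + 1) j * (m - j) * (m + 1 - j) := by
    have e₁ := aperyBinom_succ_right_mul m j
    have e₂ := aperyBinom_succ_left_mul m j
    linear_combination e₁ - (m - j) * e₂
  -- `h₂, h₁, h₀` express every term through `aperyBinom (m + 1) j` without dividing by `m + 1 - j`
  unfold aperyCert
  refine mul_right_cancel₀ (b := ((j : ℤ) + 1) ^ 4) (by positivity) ?_
  push_cast
  linear_combination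
    ((m : ℤ) + 2) ^ 3 * (aperyBinom (m + 2) (j + 1) * ((j : ℤ) + 1) ^ 2
      + aperyBinom (m + 1) j * (m + j + 2) * (m + j + 3)) * h₂
    - ((2 * (m : ℤ) + 3) * (17 * (m : ℤ) ^ 2 + 51 * m + 39)
        + 4 * (2 * (m : ℤ) + 3) * (((j : ℤ) + 1) * (2 * j + 3) - (2 * (m : ℤ) + 3) ^ 2))
      * (aperyBinom (m + 1) (j + 1) * ((j : ℤ) + 1) ^ 2
        + aperyBinom (m + 1) j * (m + 1 - j) * (m + j + 2)) * h₁
    + ((m : ℤ) + 1) ^ 3 * (aperyBinom m (j + 1) * ((j : ℤ) + 1) ^ 2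
      + aperyBinom (m + 1) j * (m - j) * (m + 1 - j)) * h₀

theorem sum_range_aperyBinom_sq_recurrence_eq_aperyCert (m j : ℕ) :
    ∑ k ∈ range (j + 1),
      (((m : ℤ) + 2) ^ 3 * aperyBinom (m + 2) k ^ 2
        - (2 * (m : ℤ) + 3) * (17 * (m : ℤ) ^ 2 + 51 * m + 39) * aperyBinom (m + 1) k ^ 2
        + ((m : ℤ) + 1) ^ 3 * aperyBinom m k ^ 2)
      = aperyCert (m + 1) j := by
  induction j with
  | zero =>
    simp only [zero_add, sum_range_one, aperyCert, aperyBinom, Nat.choose_zero_right]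
    push_cast
    ring
  | succ j ih => rw [sum_range_succ, ih, aperyBinom_sq_recurrence_eq_aperyCert_sub]; ring

theorem apery_eq_sum_aperyBinom_sq {n N : ℕ} (h : n < N) :
    apery n = ∑ k ∈ range N, aperyBinom n k ^ 2 := by
  simp only [apery, aperyBinom, mul_pow]
  refine sum_subset (range_subset_range.2 h) fun k _ hk => ?_
  simp [Nat.choose_eq_zero_of_lt (not_lt.1 (mem_range.not.1 hk))]

theorem apery_recurrence (k : ℕ) :
    ((k : ℤ) + 1) ^ 3 * apery (k + 1)
      = (2 * (k : ℤ) + 1) * (17 * (k : ℤ) ^ 2 + 17 * k + 5) * apery k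
        - (k : ℤ) ^ 3 * apery (k - 1) := by
  cases k with
  | zero => simp [apery, sum_range_succ]
  | succ m =>
    have h := sum_range_aperyBinom_sq_recurrence_eq_aperyCert m (m + 2)
    have hcert : aperyCert (m + 1) (m + 2) = 0 := by
      simp [aperyCert, aperyBinom]
    rw [hcert, sum_add_distrib, sum_sub_distrib, ← mul_sum, ← mul_sum, ← mul_sum,
      ← apery_eq_sum_aperyBinom_sq (by omega), ← apery_eq_sum_aperyBinom_sq (by omega),
      ← apery_eq_sum_aperyBinom_sq (by omega)] at h
    push_cast
    linear_combination h

theorem apery_sum_divisible_general (x : Polynomial ℤ) (n : ℕ) :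
    (n : ℤ) ^ 3 ∣ ∑ k ∈ Finset.range n,
      ((k : ℤ) ^ 3 * x.eval ((k : ℤ) - 2)
        - (2 * (k : ℤ) + 1) * (17 * (k : ℤ) ^ 2 + 17 * k + 5) * x.eval ((k : ℤ) - 1)
        + ((k : ℤ) + 1) ^ 3 * x.eval (k : ℤ)) * apery k := by
  cases n with
  | zero => simp
  | succ m =>
    rw [sum_adjoint_mul_eq_boundary apery_recurrence (x.eval ·) m]
    push_cast
    exact dvd_mul_right _ _

theorem apery_sum_divisible (x : Polynomial ℤ) (n : ℕ) (hn : 1 ≤ n) :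
    (n : ℤ) ^ 3 ∣ ∑ k ∈ Finset.range n,
      ((k : ℤ) ^ 3 * x.eval ((k : ℤ) - 2)
        - (2 * (k : ℤ) + 1) * (17 * (k : ℤ) ^ 2 + 17 * k + 5) * x.eval ((k : ℤ) - 1)
        + ((k : ℤ) + 1) ^ 3 * x.eval (k : ℤ)) * apery k :=
  apery_sum_divisible_general x n
end

section
/- Fix z ∈ ℤ. For every polynomial x with integer coefficients and every integer n ≥ 1, the integer n divides ∑_{k=0}^{n−1} [ k x(k−2) − (2k+1)(2z+1) x(k−1) + (k+1) x(k) ] · D_k(z), where x is evaluated at the indicated integers (which may be negative). -/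
/-!
Writing `a k i = (k choose i) ((k+i) choose i)`, the coefficients `a k i`, `a (k+1) i`,
and `a (k+1) (i-1)` are `a (k+2) i` times explicit rational functions of `k` and `i`, which makes the
three-term recurrence `(k+2) D_{k+2} = (2k+3)(2z+1) D_{k+1} - (k+1) D_k` hold coefficientwise.
Since the summand is the adjoint of this recurrence applied to `x`, summation by parts
telescopes the sum to `n (x(n-1) D_{n-1} - x(n-2) D_n)`; only the integrality of the values of
`x` matters.
-/

open Finset Polynomial

/-- The central Delannoy polynomials `D k (z) = ∑_{i=0}^k (k choose i) ((k+i) choose i) z^i`. -/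
def delannoy (k : ℕ) (z : ℤ) : ℤ :=
  ∑ i ∈ Finset.range (k + 1), (k.choose i : ℤ) * ((k + i).choose i : ℤ) * z ^ i

def delannoyCoeff (k i : ℕ) : ℕ := k.choose i * (k + i).choose i

lemma delannoy_eq_sum_range {k N : ℕ} (hN : k < N) (z : ℤ) :
    delannoy k z = ∑ i ∈ range N, (delannoyCoeff k i : ℤ) * z ^ i := by
  unfold delannoy delannoyCoeff
  push_cast
  refine sum_subset (range_subset_range.2 hN) fun i _ hi => ?_
  rw [Nat.choose_eq_zero_of_lt (by simpa using hi)]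
  simp

lemma add_one_add_mul_delannoyCoeff (n i : ℕ) :
    ((n : ℤ) + 1 + i) * delannoyCoeff n i = ((n : ℤ) + 1 - i) * delannoyCoeff (n + 1) i := by
  unfold delannoyCoeff
  rcases le_or_gt i (n + 1) with hi | hi
  · have h₁ := Nat.choose_mul_succ_eq n i
    have h₂ := Nat.choose_mul_succ_eq (n + i) i
    rw [show n + i + 1 - i = n + 1 by omega, show n + i + 1 = n + 1 + i by omega] at h₂
    zify [hi] at h₁ h₂ ⊢
    linear_combination (n.choose i : ℤ) * h₂ + ((n + 1 + i).choose i : ℤ) * h₁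
  · rw [Nat.choose_eq_zero_of_lt (by omega : n < i), Nat.choose_eq_zero_of_lt hi]
    simp

lemma sq_add_one_mul_delannoyCoeff_add_one (n i : ℕ) :
    (i + 1) ^ 2 * delannoyCoeff (n + 1) (i + 1) = (n + 2 + i) * (n + 1 + i) * delannoyCoeff n i := by
  unfold delannoyCoeff
  have h₁ := Nat.add_one_mul_choose_eq n i
  have h₂ := Nat.add_one_mul_choose_eq (n + 1 + i) i
  have h₃ := Nat.choose_mul_succ_eq (n + i) i
  rw [show n + i + 1 - i = n + 1 by omega, show n + i + 1 = n + 1 + i by omega] at h₃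
  rw [show n + 1 + (i + 1) = n + 1 + i + 1 by omega]
  zify at h₁ h₂ h₃ ⊢
  linear_combination -(((n + 1 + i + 1).choose (i + 1) : ℤ) * (i + 1)) * h₁
    - ((n + 1) * (n.choose i : ℤ)) * h₂ - ((n : ℤ) + 2 + i) * (n.choose i : ℤ) * h₃

lemma delannoyCoeff_three_term (k i : ℕ) :
    ((k : ℤ) + 2) * delannoyCoeff (k + 2) (i + 1) - (2 * k + 3) * delannoyCoeff (k + 1) (i + 1)
      + (k + 1) * delannoyCoeff k (i + 1) = 2 * (2 * k + 3) * delannoyCoeff (k + 1) i := by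
  have R₁ := add_one_add_mul_delannoyCoeff k (i + 1)
  have R₂ := add_one_add_mul_delannoyCoeff (k + 1) (i + 1)
  have R₃ : ((i : ℤ) + 1) ^ 2 * delannoyCoeff (k + 2) (i + 1)
      = ((k : ℤ) + 3 + i) * (k + 2 + i) * delannoyCoeff (k + 1) i := by
    exact_mod_cast sq_add_one_mul_delannoyCoeff_add_one (k + 1) i
  push_cast at R₁ R₂
  -- after multiplying by `(k+3+i)(k+2+i)`, every term is a multiple of `delannoyCoeff (k+2) (i+1)`
  refine mul_left_cancel₀ (by positivity : ((k : ℤ) + 3 + i) * (k + 2 + i) ≠ 0) ?_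
  linear_combination ((k : ℤ) + 1) * (k + 3 + i) * R₁
    + ((k + 1) * ((k : ℤ) - i) - (2 * k + 3) * (k + 2 + i)) * R₂ + 2 * (2 * (k : ℤ) + 3) * R₃

lemma delannoy_three_term (k : ℕ) (z : ℤ) :
    ((k : ℤ) + 2) * delannoy (k + 2) z - (2 * k + 3) * delannoy (k + 1) z + (k + 1) * delannoy k z
      = 2 * (2 * k + 3) * z * delannoy (k + 1) z := by
  conv_lhs => rw [delannoy_eq_sum_range (by omega : k + 2 < k + 3),
    delannoy_eq_sum_range (by omega : k + 1 < k + 3), delannoy_eq_sum_range (by omega : k < k + 3)]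
  rw [delannoy_eq_sum_range (by omega : k + 1 < k + 2)]
  simp only [mul_sum, ← sum_sub_distrib, ← sum_add_distrib]
  have hterm (i : ℕ) : ((k : ℤ) + 2) * (delannoyCoeff (k + 2) (i + 1) * z ^ (i + 1))
      - (2 * k + 3) * (delannoyCoeff (k + 1) (i + 1) * z ^ (i + 1))
      + (k + 1) * (delannoyCoeff k (i + 1) * z ^ (i + 1))
      = 2 * (2 * k + 3) * z * (delannoyCoeff (k + 1) i * z ^ i) := by
    linear_combination z ^ (i + 1) * delannoyCoeff_three_term k i
  rw [sum_range_succ', sum_congr rfl fun i _ => hterm i]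
  simp only [delannoyCoeff, Nat.choose_zero_right]
  ring

lemma delannoy_recurrence (n : ℕ) (z : ℤ) :
    ((n : ℤ) + 1) * delannoy (n + 1) z
      = (2 * n + 1) * (2 * z + 1) * delannoy n z - n * delannoy (n - 1) z := by
  rcases n with _ | k
  · simp [delannoy, sum_range_succ, add_comm]
  · push_cast
    linear_combination delannoy_three_term k z

theorem sum_adjoint_mul_eq_of_recurrence {R : Type*} [CommRing R] (c : R) (D : ℕ → R)
    -- at `n = 0` this says `D 1 = c * D 0`: the truncated `n - 1` carries the coefficient `0`
    (hD : ∀ n : ℕ, ((n : R) + 1) * D (n + 1) = (2 * n + 1) * c * D n - n * D (n - 1))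
    (f : ℤ → R) (n : ℕ) :
    ∑ k ∈ range n, ((k : R) * f ((k : ℤ) - 2) - (2 * (k : R) + 1) * c * f ((k : ℤ) - 1)
      + ((k : R) + 1) * f k) * D k = n * (f ((n : ℤ) - 1) * D (n - 1) - f ((n : ℤ) - 2) * D n) := by
  induction n with
  | zero => simp
  | succ n ih =>
    rw [sum_range_succ, ih, Nat.add_sub_cancel]
    push_cast
    rw [show (n : ℤ) + 1 - 1 = n by ring, show (n : ℤ) + 1 - 2 = n - 1 by ring]
    linear_combination f ((n : ℤ) - 1) * hD n

theorem delannoy_sum_divisible_general (z : ℤ) (x : Polynomial ℤ) (n : ℕ) :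
    (n : ℤ) ∣ ∑ k ∈ Finset.range n,
      ((k : ℤ) * x.eval ((k : ℤ) - 2)
        - (2 * (k : ℤ) + 1) * (2 * z + 1) * x.eval ((k : ℤ) - 1)
        + ((k : ℤ) + 1) * x.eval (k : ℤ)) * delannoy k z :=
  ⟨_, sum_adjoint_mul_eq_of_recurrence (2 * z + 1) (delannoy · z) (delannoy_recurrence · z)
    (x.eval ·) n⟩

theorem delannoy_sum_divisible (z : ℤ) (x : Polynomial ℤ) (n : ℕ) (hn : 1 ≤ n) :
    (n : ℤ) ∣ ∑ k ∈ Finset.range n,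
      ((k : ℤ) * x.eval ((k : ℤ) - 2)
        - (2 * (k : ℤ) + 1) * (2 * z + 1) * x.eval ((k : ℤ) - 1)
        + ((k : ℤ) + 1) * x.eval (k : ℤ)) * delannoy k z :=
  delannoy_sum_divisible_general z x n
end
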